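/- For every i ≥ 0, the Linear Ordering instance (V_i, K_i) built from the triangle decomposition C_i of G_i (each directed triangle uvwu contributing the three constraints (u,v,w), (v,w,u), (w,u,v)) has maximum deviation 0: no linear ordering of V_i satisfies more than |K_i|/6 constraints. -/

import Mathlib

/-- The vertex set of the recursively constructed graph `G_i`. -/
def Vt : ℕ → Type
  | 0 => Fin 3
  | (i+1) => Vt i ⊕ Vt i

instance VtDecEq : (i : ℕ) → DecidableEq (Vt i)
  | 0 => inferInstanceAs (DecidableEq (Fin 3))
  | (i+1) => @instDecidableEqSum _ _ (VtDecEq i) (VtDecEq i)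

instance VtFintype : (i : ℕ) → Fintype (Vt i)
  | 0 => inferInstanceAs (Fintype (Fin 3))
  | (i+1) => @instFintypeSum _ _ (VtFintype i) (VtFintype i)

/-- The triangle decomposition `C_i` of `G_i`: a directed triangle `u v w u` is stored as
`(u, v, w)`. At each step the chosen triangle in each of the two copies is the first one. -/
def Ct : (i : ℕ) → List (Vt i × Vt i × Vt i)
  | 0 => [((0 : Fin 3), (1 : Fin 3), (2 : Fin 3)), ((2 : Fin 3), (1 : Fin 3), (0 : Fin 3))]
  | (i+1) =>
    match Ct i with
    | [] => []
    | (a, b, c) :: rest =>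
      (rest.map fun t => ((Sum.inl t.1 : Vt (i+1)), Sum.inl t.2.1, Sum.inl t.2.2)) ++
      (rest.map fun t => ((Sum.inr t.1 : Vt (i+1)), Sum.inr t.2.1, Sum.inr t.2.2)) ++
      [ ((Sum.inl a : Vt (i+1)), Sum.inl b, Sum.inr c),
        ((Sum.inl b : Vt (i+1)), Sum.inl c, Sum.inr b),
        ((Sum.inl c : Vt (i+1)), Sum.inl a, Sum.inr a),
        ((Sum.inr a : Vt (i+1)), Sum.inr b, Sum.inl c),
        ((Sum.inr b : Vt (i+1)), Sum.inr c, Sum.inl b),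
        ((Sum.inr c : Vt (i+1)), Sum.inr a, Sum.inl a) ]

/-- The Linear Ordering instance `K_i`: each directed triangle `u v w u` contributes the
constraints `(u,v,w)`, `(v,w,u)` and `(w,u,v)`. -/
def Kt (i : ℕ) : List (Vt i × Vt i × Vt i) :=
  (Ct i).flatMap fun t => [t, (t.2.1, t.2.2, t.1), (t.2.2, t.1, t.2.1)]

/-!
For an ordering `α`, the number of rotations of a triangle `u → v → w → u` that `α` satisfies
equals the number of its arcs that `α` orients forward, minus one. The triangles of `C_i` cover
the arcs of the symmetric digraph `G_i`, so exactly half of those arcs point forward, whatever `α`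
is: summing, every ordering satisfies `3|C_i|/2 - |C_i| = |K_i|/6` constraints. Along the recursion
this is an induction: the six triangles added in `C_{i+1}` use the arcs of the two deleted copies
of the first triangle of `C_i` together with six pairs of opposite arcs between the copies.
-/

section Rotations

variable {V : Type*}

def numSatisfied (α : V → ℕ) (K : List (V × V × V)) : ℕ :=
  K.countP fun t => decide (α t.1 < α t.2.1 ∧ α t.2.1 < α t.2.2)

def rotations (t : V × V × V) : List (V × V × V) :=
  [t, (t.2.1, t.2.2, t.1), (t.2.2, t.1, t.2.1)]

def mapTriple {W : Type*} (f : V → W) (t : V × V × V) : W × W × W :=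
  (f t.1, f t.2.1, f t.2.2)

def forwardArc (α : V → ℕ) (u v : V) : ℕ :=
  if α u < α v then 1 else 0

lemma forwardArc_add_forwardArc_swap {α : V → ℕ} {u v : V} (h : α u ≠ α v) :
    forwardArc α u v + forwardArc α v u = 1 := by
  unfold forwardArc; split_ifs <;> omega

lemma numSatisfied_rotations_add_one {α : V → ℕ} {u v w : V} (hwu : α w ≠ α u) :
    numSatisfied α (rotations (u, v, w)) + 1 =
      forwardArc α u v + forwardArc α v w + forwardArc α w u := by
  simp only [numSatisfied, rotations, forwardArc, List.countP_cons, List.countP_nil,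
    decide_eq_true_eq]
  grind

lemma numSatisfied_rotations_add_numSatisfied_rotations_reverse {α : V → ℕ} {u v w : V}
    (huv : α u ≠ α v) (hvw : α v ≠ α w) (hwu : α w ≠ α u) :
    numSatisfied α (rotations (u, v, w)) + numSatisfied α (rotations (w, v, u)) = 1 := by
  have := numSatisfied_rotations_add_one (v := v) hwu
  have := numSatisfied_rotations_add_one (v := v) hwu.symm
  have := forwardArc_add_forwardArc_swap huv
  have := forwardArc_add_forwardArc_swap hvw
  have := forwardArc_add_forwardArc_swap hwu
  omega

lemma numSatisfied_flatMap (α : V → ℕ) (l : List (V × V × V)) :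
    numSatisfied α (l.flatMap rotations) = (l.map fun t => numSatisfied α (rotations t)).sum := by
  simp [numSatisfied, List.countP_flatMap, Function.comp_def]

lemma length_flatMap_rotations (l : List (V × V × V)) :
    (l.flatMap rotations).length = 3 * l.length := by
  simp [rotations, List.length_flatMap, mul_comm]

lemma numSatisfied_map_mapTriple {W : Type*} (α : W → ℕ) (f : V → W) (K : List (V × V × V)) :
    numSatisfied α (K.map (mapTriple f)) = numSatisfied (α ∘ f) K := by
  simp only [numSatisfied, List.countP_map]; rfl

lemma numSatisfied_rotations_mapTriple {W : Type*} (α : W → ℕ) (f : V → W) (t : V × V × V) :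
    numSatisfied α (rotations (mapTriple f t)) = numSatisfied (α ∘ f) (rotations t) :=
  numSatisfied_map_mapTriple α f (rotations t)

end Rotations

section Doubling

variable {W : Type*}

def gadget (a b c : W) : List ((W ⊕ W) × (W ⊕ W) × (W ⊕ W)) :=
  [(.inl a, .inl b, .inr c), (.inl b, .inl c, .inr b), (.inl c, .inl a, .inr a),
    (.inr a, .inr b, .inl c), (.inr b, .inr c, .inl b), (.inr c, .inr a, .inl a)]

def doubleTriangles : List (W × W × W) → List ((W ⊕ W) × (W ⊕ W) × (W ⊕ W))
  | [] => []
  | (a, b, c) :: rest =>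
    rest.map (mapTriple Sum.inl) ++ rest.map (mapTriple Sum.inr) ++ gadget a b c

lemma doubleTriangles_ne_nil {l : List (W × W × W)} (hl : l ≠ []) : doubleTriangles l ≠ [] := by
  obtain ⟨⟨a, b, c⟩, rest, rfl⟩ := List.exists_cons_of_ne_nil hl
  simp [doubleTriangles, gadget]

lemma ne_of_mem_doubleTriangles {l : List (W × W × W)} (hl : ∀ t ∈ l, t.2.2 ≠ t.1) :
    ∀ t ∈ doubleTriangles l, t.2.2 ≠ t.1 := by
  cases l with
  | nil => simp [doubleTriangles]
  | cons t rest =>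
    obtain ⟨a, b, c⟩ := t
    have hrest : ∀ t ∈ rest, t.2.2 ≠ t.1 := fun t ht => hl t (List.mem_cons_of_mem _ ht)
    simp only [doubleTriangles, gadget, List.mem_append, List.mem_map, List.mem_cons]
    rintro t ((⟨s, hs, rfl⟩ | ⟨s, hs, rfl⟩) | rfl | rfl | rfl | rfl | rfl | rfl | h)
    · simpa [mapTriple] using hrest s hs
    · simpa [mapTriple] using hrest s hs
    all_goals simp_all

lemma numSatisfied_flatMap_gadget {α : W ⊕ W → ℕ} (hα : Function.Injective α) {a c : W}
    (b : W) (hca : c ≠ a) :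
    numSatisfied α ((gadget a b c).flatMap rotations) =
      2 + numSatisfied (α ∘ Sum.inl) (rotations (a, b, c)) +
        numSatisfied (α ∘ Sum.inr) (rotations (a, b, c)) := by
  rw [← numSatisfied_rotations_mapTriple, ← numSatisfied_rotations_mapTriple]
  dsimp only [mapTriple]
  have hinl : α (.inl c) ≠ α (.inl a) := hα.ne (by simpa using hca)
  have hinr : α (.inr c) ≠ α (.inr a) := hα.ne (by simpa using hca)
  have hcross {x y : W} : α (.inl x) ≠ α (.inr y) := hα.ne Sum.inl_ne_inr
  simp only [gadget, numSatisfied_flatMap, List.map_cons, List.map_nil, List.sum_cons,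
    List.sum_nil]
  have := numSatisfied_rotations_add_one (v := Sum.inl b) hinl
  have := numSatisfied_rotations_add_one (v := Sum.inr b) hinr
  have := numSatisfied_rotations_add_one (u := Sum.inl a) (v := Sum.inl b) (w := Sum.inr c)
    hcross.symm
  have := numSatisfied_rotations_add_one (u := Sum.inl b) (v := Sum.inl c) (w := Sum.inr b)
    hcross.symm
  have := numSatisfied_rotations_add_one (u := Sum.inl c) (v := Sum.inl a) (w := Sum.inr a)
    hcross.symm
  have := numSatisfied_rotations_add_one (u := Sum.inr a) (v := Sum.inr b) (w := Sum.inl c)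
    hcross
  have := numSatisfied_rotations_add_one (u := Sum.inr b) (v := Sum.inr c) (w := Sum.inl b)
    hcross
  have := numSatisfied_rotations_add_one (u := Sum.inr c) (v := Sum.inr a) (w := Sum.inl a)
    hcross
  have := forwardArc_add_forwardArc_swap (u := Sum.inl a) (v := Sum.inr a) hcross
  have := forwardArc_add_forwardArc_swap (u := Sum.inl b) (v := Sum.inr b) hcross
  have := forwardArc_add_forwardArc_swap (u := Sum.inl a) (v := Sum.inr c) hcross
  have := forwardArc_add_forwardArc_swap (u := Sum.inl b) (v := Sum.inr c) hcross
  have := forwardArc_add_forwardArc_swap (u := Sum.inl c) (v := Sum.inr a) hcross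
  have := forwardArc_add_forwardArc_swap (u := Sum.inl c) (v := Sum.inr b) hcross
  omega

lemma two_mul_numSatisfied_doubleTriangles {a b c : W} {rest : List (W × W × W)} (hca : c ≠ a)
    (hcount : ∀ α : W → ℕ, Function.Injective α →
      2 * numSatisfied α (((a, b, c) :: rest).flatMap rotations) = rest.length + 1)
    {α : W ⊕ W → ℕ} (hα : Function.Injective α) :
    2 * numSatisfied α ((doubleTriangles ((a, b, c) :: rest)).flatMap rotations) =
      (doubleTriangles ((a, b, c) :: rest)).length := by
  have hL := hcount (α ∘ Sum.inl) (hα.comp Sum.inl_injective)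
  have hR := hcount (α ∘ Sum.inr) (hα.comp Sum.inr_injective)
  have hgadget := numSatisfied_flatMap_gadget hα b hca
  rw [numSatisfied_flatMap] at hL hR hgadget ⊢
  simp only [doubleTriangles, List.map_append, List.sum_append, List.map_map, Function.comp_def,
    numSatisfied_rotations_mapTriple, List.length_append, List.length_map, List.map_cons,
    List.sum_cons] at hL hR hgadget ⊢
  simp only [gadget, List.length_cons, List.length_nil] at hgadget ⊢
  omega

end Doubling

lemma Kt_eq (i : ℕ) : Kt i = (Ct i).flatMap rotations := rfl

lemma Ct_succ (i : ℕ) : Ct (i + 1) = doubleTriangles (Ct i) := by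
  rw [Ct]
  rcases Ct i with _ | ⟨⟨a, b, c⟩, rest⟩ <;> rfl

lemma Ct_ne_nil : ∀ i, Ct i ≠ []
  | 0 => by simp [Ct]
  | i + 1 => by rw [Ct_succ]; exact doubleTriangles_ne_nil (Ct_ne_nil i)

lemma ne_of_mem_Ct : ∀ i, ∀ t ∈ Ct i, t.2.2 ≠ t.1
  | 0 => by decide
  | i + 1 => by rw [Ct_succ]; exact ne_of_mem_doubleTriangles (ne_of_mem_Ct i)

lemma two_mul_numSatisfied_Kt : ∀ (i : ℕ) (α : Vt i → ℕ), Function.Injective α →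
    2 * numSatisfied α (Kt i) = (Ct i).length
  | 0, α, hα => by
    have h01 : α (0 : Fin 3) ≠ α (1 : Fin 3) := hα.ne (show (0 : Fin 3) ≠ 1 by decide)
    have h12 : α (1 : Fin 3) ≠ α (2 : Fin 3) := hα.ne (show (1 : Fin 3) ≠ 2 by decide)
    have h20 : α (2 : Fin 3) ≠ α (0 : Fin 3) := hα.ne (show (2 : Fin 3) ≠ 0 by decide)
    have := numSatisfied_rotations_add_numSatisfied_rotations_reverse (V := Vt 0) h01 h12 h20
    rw [Kt_eq, numSatisfied_flatMap]
    simp only [Ct, List.map_cons, List.map_nil, List.sum_cons, List.sum_nil, List.length_cons,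
      List.length_nil]
    omega
  | i + 1, α, hα => by
    obtain ⟨⟨a, b, c⟩, rest, h⟩ := List.exists_cons_of_ne_nil (Ct_ne_nil i)
    have hca : c ≠ a := ne_of_mem_Ct i (a, b, c) (h ▸ List.mem_cons_self)
    rw [Kt_eq, Ct_succ, h]
    refine two_mul_numSatisfied_doubleTriangles hca (fun β hβ => ?_) hα
    rw [← List.length_cons, ← h, ← Kt_eq]
    exact two_mul_numSatisfied_Kt i β hβ

lemma six_mul_numSatisfied_Kt {i : ℕ} {α : Vt i → ℕ} (hα : Function.Injective α) :
    6 * numSatisfied α (Kt i) = (Kt i).length := by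
  rw [Kt_eq, length_flatMap_rotations, ← two_mul_numSatisfied_Kt i α hα, Kt_eq]
  ring

theorem stmt17 (i : ℕ) :
    (∀ α : Vt i → ℕ, Function.Injective α →
      (((Kt i).countP (fun t => decide (α t.1 < α t.2.1 ∧ α t.2.1 < α t.2.2))) : ℚ) ≤
        ((Kt i).length : ℚ) / 6) ∧
    (∃ α : Vt i → ℕ, Function.Injective α ∧
      (((Kt i).countP (fun t => decide (α t.1 < α t.2.1 ∧ α t.2.1 < α t.2.2))) : ℚ) =
        ((Kt i).length : ℚ) / 6) := by
  have key : ∀ α : Vt i → ℕ, Function.Injective α →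
      (numSatisfied α (Kt i) : ℚ) = ((Kt i).length : ℚ) / 6 := by
    intro α hα
    rw [← six_mul_numSatisfied_Kt hα]
    push_cast
    ring
  refine ⟨fun α hα => (key α hα).le, ?_⟩
  have hinj : Function.Injective fun v => (Fintype.equivFin (Vt i) v : ℕ) :=
    Fin.val_injective.comp (Fintype.equivFin (Vt i)).injective
  exact ⟨_, hinj, key _ hinj⟩
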